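/- During two consecutive k-phases i-1 and i of a paging request sequence, exactly k + m_i distinct items are requested, where m_i is the number of new requests in phase i; consequently any paging strategy with h servers makes at least k + m_i - h server movements (faults) during those two phases. -/

import Mathlib

/-! A phase followed by another phase is a maximal greedy prefix, so it requests exactly `k`
distinct items; the items of phase `i` not requested in phase `i - 1` contribute `m_i` more.
For the fault bound, each distinct item of a window is either faulted on at its first request
in the window or was already cached when the window began (an item cannot enter the cache
without being requested), and the cache holds at most `h` items. -/

/-- Length of the maximal prefix of `r` containing at most `k` distinct items. -/
def maxPrefixLen {α : Type*} [DecidableEq α] (k : ℕ) (r : List α) : ℕ :=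
  ((List.range (r.length + 1)).filter (fun n => (r.take n).dedup.length ≤ k)).foldr max 0

/-- Greedy phase partition, with fuel for termination. -/
def phasesAux {α : Type*} [DecidableEq α] (k : ℕ) : ℕ → List α → List (List α)
  | 0, _ => []
  | _, [] => []
  | (fuel+1), r =>
      let n := max 1 (maxPrefixLen k r)
      r.take n :: phasesAux k fuel (r.drop n)

/-- The `k`-phase partition of `r`: greedy maximal consecutive blocks, each
containing requests to at most `k` distinct items. -/
def phases {α : Type*} [DecidableEq α] (k : ℕ) (r : List α) : List (List α) :=
  phasesAux k r.length r

/-- `L(k,r)`: the number of `k`-phases of `r`, minus 1. -/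
def numPhases {α : Type*} [DecidableEq α] (k : ℕ) (r : List α) : ℕ :=
  (phases k r).length - 1

/-- For each `k`-phase other than the first, the number of new requests:
items requested in the phase but not in the previous phase. -/
def newCounts {α : Type*} [DecidableEq α] (k : ℕ) (r : List α) : List ℕ :=
  ((phases k r).zip (phases k r).tail).map
    (fun p => (p.2.dedup.filter (fun x => x ∉ p.1)).length)

/-- `m(k,r)`: the average number of new requests per `k`-phase (other than the first). -/
noncomputable def avgNew {α : Type*} [DecidableEq α] (k : ℕ) (r : List α) : ℝ :=
  ((newCounts k r).sum : ℝ) / (numPhases k r : ℝ)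

/-- Index in `r` at which the `i`-th `k`-phase starts. -/
def phaseStart {α : Type*} [DecidableEq α] (k : ℕ) (r : List α) (i : ℕ) : ℕ :=
  (((phases k r).take i).map List.length).sum

/-- An execution of a paging strategy with `h` servers (cache slots) on request
sequence `r`.  `cache i` is the set of items with a server just before request `i`
is served; the cache starts empty, never exceeds `h` items, contains each
requested item right after it is served, and only requested items may enter. -/
structure PagingSchedule {α : Type*} [DecidableEq α] (h : ℕ) (r : List α) where
  cache : ℕ → Finset α
  init : cache 0 = ∅
  card_le : ∀ i, (cache i).card ≤ h
  serves : ∀ i : Fin r.length, r.get i ∈ cache (i.val + 1)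
  update : ∀ i : Fin r.length, cache (i.val + 1) ⊆ cache i.val ∪ {r.get i}

/-- Number of faults: requests to items not currently in the cache. -/
def faults {α : Type*} [DecidableEq α] {h : ℕ} {r : List α} (s : PagingSchedule h r) : ℕ :=
  (Finset.univ.filter (fun i : Fin r.length => r.get i ∉ s.cache i.val)).card

/-- Cost of a schedule: each server's first placement is free, so the number of
(paid) server movements is the number of faults minus `h`. -/
def schedCost {α : Type*} [DecidableEq α] {h : ℕ} {r : List α} (s : PagingSchedule h r) : ℕ :=
  faults s - h

/-- Optimal offline paging cost with `h` servers on `r`. -/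
noncomputable def costOpt {α : Type*} [DecidableEq α] (h : ℕ) (r : List α) : ℕ :=
  sInf {c | ∃ s : PagingSchedule h r, c = schedCost s}

/-- Number of faults incurred at requests with index in `[a, b)`. -/
def windowFaults {α : Type*} [DecidableEq α] {h : ℕ} {r : List α}
    (s : PagingSchedule h r) (a b : ℕ) : ℕ :=
  (Finset.univ.filter
    (fun i : Fin r.length => a ≤ i.val ∧ i.val < b ∧ r.get i ∉ s.cache i.val)).card

/-- A schedule is conservative if it faults at most `h` times during any
consecutive subsequence of requests to at most `h` distinct items. -/
def Conservative {α : Type*} [DecidableEq α] {h : ℕ} {r : List α}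
    (s : PagingSchedule h r) : Prop :=
  ∀ a b : ℕ, ((r.drop a).take (b - a)).dedup.length ≤ h → windowFaults s a b ≤ h

section

variable {α : Type*} [DecidableEq α]

lemma length_dedup_append (P Q : List α) :
    (P ++ Q).dedup.length = P.dedup.length + (Q.dedup.filter (· ∉ P)).length := by
  have hfilter : (Q.dedup.filter (· ∉ P)).length = (Q.toFinset \ P.toFinset).card := by
    rw [← List.toFinset_card_of_nodup (Q.nodup_dedup.filter _)]
    congr 1
    ext x
    simp
  rw [hfilter, ← List.card_toFinset, ← List.card_toFinset, List.toFinset_append,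
    Finset.union_comm, ← Finset.card_sdiff_add_card, add_comm]

section MaxPrefixLen

variable (k : ℕ) (r : List α)

lemma maxPrefixLen_mem :
    maxPrefixLen k r ∈
      (List.range (r.length + 1)).filter (fun n => (r.take n).dedup.length ≤ k) := by
  have hne : (List.range (r.length + 1)).filter (fun n => (r.take n).dedup.length ≤ k) ≠ [] :=
    List.ne_nil_of_mem (a := 0) (by simp)
  exact List.maximum_mem (List.foldr_max_of_ne_nil hne).symm

lemma dedup_take_maxPrefixLen_le : (r.take (maxPrefixLen k r)).dedup.length ≤ k := by
  simpa using (List.mem_filter.1 (maxPrefixLen_mem k r)).2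

variable {k r}

lemma le_maxPrefixLen {n : ℕ} (hn : n ≤ r.length)
    (hdistinct : (r.take n).dedup.length ≤ k) : n ≤ maxPrefixLen k r :=
  List.le_max_of_le
    (List.mem_filter.2 ⟨List.mem_range.2 (Nat.lt_succ_of_le hn), by simpa using hdistinct⟩)
    le_rfl

lemma one_le_maxPrefixLen (hk : 0 < k) (hr : r ≠ []) : 1 ≤ maxPrefixLen k r := by
  refine le_maxPrefixLen (List.length_pos_iff.2 hr) ?_
  calc (r.take 1).dedup.length ≤ (r.take 1).length := (List.dedup_sublist _).length_le
    _ ≤ k := by rw [List.length_take]; omega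

lemma dedup_take_maxPrefixLen_eq (hr : maxPrefixLen k r < r.length) :
    (r.take (maxPrefixLen k r)).dedup.length = k := by
  have hle := dedup_take_maxPrefixLen_le k r
  set n := maxPrefixLen k r
  have hmaximal : k < (r.take (n + 1)).dedup.length := by
    by_contra! hsucc
    exact absurd (le_maxPrefixLen hr hsucc) (Nat.not_succ_le_self n)
  have hstep : (r.take (n + 1)).dedup.length ≤ (r.take n).dedup.length + 1 := by
    rw [List.take_succ_eq_append_getElem hr, ← List.card_toFinset, ← List.card_toFinset,
      List.toFinset_append, Finset.union_comm]
    simpa using Finset.card_insert_le r[n] (r.take n).toFinset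
  omega

end MaxPrefixLen

section Phases

variable {k : ℕ}

@[simp]
lemma phases_nil : phases k ([] : List α) = [] := rfl

lemma phasesAux_nil (fuel : ℕ) : phasesAux k fuel ([] : List α) = [] := by
  cases fuel <;> rfl

lemma phasesAux_congr {fuel fuel' : ℕ} {r : List α} (h : r.length ≤ fuel)
    (h' : r.length ≤ fuel') : phasesAux k fuel r = phasesAux k fuel' r := by
  induction fuel generalizing fuel' r with
  | zero => rw [List.eq_nil_of_length_eq_zero (Nat.le_zero.1 h), phasesAux_nil, phasesAux_nil]
  | succ fuel ih =>
    obtain _ | ⟨a, t⟩ := r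
    · rw [phasesAux_nil]; cases fuel' <;> rfl
    · simp only [List.length_cons] at h h'
      obtain ⟨fuel', rfl⟩ : ∃ m, fuel' = m + 1 := ⟨fuel' - 1, by omega⟩
      simp only [phasesAux]
      congr 1
      apply ih <;> simp only [List.length_drop, List.length_cons] <;> omega

lemma phases_of_ne_nil {r : List α} (hr : r ≠ []) :
    phases k r = r.take (max 1 (maxPrefixLen k r)) ::
      phases k (r.drop (max 1 (maxPrefixLen k r))) := by
  obtain ⟨a, t, rfl⟩ := List.exists_cons_of_ne_nil hr
  rw [phases, List.length_cons, phasesAux, phases]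
  · congr 1
    apply phasesAux_congr <;> simp
  · exact List.cons_ne_nil a t

lemma flatten_phases : ∀ r : List α, (phases k r).flatten = r
  | [] => rfl
  | a :: t => by
    rw [phases_of_ne_nil (List.cons_ne_nil a t), List.flatten_cons, flatten_phases,
      List.take_append_drop]
termination_by r => r.length
decreasing_by simp only [List.length_drop, List.length_cons]; omega

lemma phases_flatten_drop_phases (r : List α) (j : ℕ) :
    phases k ((phases k r).drop j).flatten = (phases k r).drop j := by
  induction j generalizing r with
  | zero => rw [List.drop_zero, flatten_phases]
  | succ j ih =>
    rcases eq_or_ne r [] with rfl | hr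
    · simp
    · rw [phases_of_ne_nil hr, List.drop_succ_cons, ih]

lemma drop_phaseStart (r : List α) (j : ℕ) :
    r.drop (phaseStart k r j) = ((phases k r).drop j).flatten := by
  calc r.drop (phaseStart k r j)
      = ((phases k r).take j ++ (phases k r).drop j).flatten.drop (phaseStart k r j) := by
        rw [List.take_append_drop, flatten_phases]
    _ = ((phases k r).drop j).flatten := by
        rw [List.flatten_append, phaseStart, ← List.length_flatten, List.drop_left]

lemma phases_drop_phaseStart (r : List α) (j : ℕ) :
    phases k (r.drop (phaseStart k r j)) = (phases k r).drop j := by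
  rw [drop_phaseStart, phases_flatten_drop_phases]

lemma phaseStart_succ {r : List α} {j : ℕ} (hj : j < (phases k r).length) :
    phaseStart k r (j + 1) = phaseStart k r j + ((phases k r).getD j []).length := by
  rw [phaseStart, phaseStart, List.take_add_one, List.getElem?_eq_getElem hj,
    List.getD_eq_getElem _ _ hj, List.map_append, List.sum_append]
  simp

lemma dedup_length_of_phases_eq_cons_cons (hk : 0 < k) {t P Q : List α} {rest : List (List α)}
    (h : phases k t = P :: Q :: rest) : P.dedup.length = k := by
  have ht : t ≠ [] := by rintro rfl; simp at h
  rw [phases_of_ne_nil ht, List.cons.injEq] at h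
  obtain ⟨rfl, hrest⟩ := h
  have hdrop : t.drop (max 1 (maxPrefixLen k t)) ≠ [] := by
    rintro hnil
    rw [hnil, phases_nil] at hrest
    exact List.cons_ne_nil _ _ hrest.symm
  rw [max_eq_right (one_le_maxPrefixLen hk ht)] at hdrop ⊢
  exact dedup_take_maxPrefixLen_eq (by simpa using hdrop)

variable {r : List α} {j : ℕ}

lemma drop_phases_eq (hj : j + 1 < (phases k r).length) :
    (phases k r).drop j =
      (phases k r).getD j [] :: (phases k r).getD (j + 1) [] :: (phases k r).drop (j + 2) := by
  rw [List.drop_eq_getElem_cons (by omega), List.drop_eq_getElem_cons hj,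
    List.getD_eq_getElem _ _ (by omega), List.getD_eq_getElem _ _ hj]

lemma dedup_length_getD_phases (hk : 0 < k) (hj : j + 1 < (phases k r).length) :
    ((phases k r).getD j []).dedup.length = k :=
  dedup_length_of_phases_eq_cons_cons hk (by rw [phases_drop_phaseStart, drop_phases_eq hj])

lemma take_drop_phaseStart (hj : j + 1 < (phases k r).length) :
    (r.drop (phaseStart k r j)).take (phaseStart k r (j + 2) - phaseStart k r j) =
      (phases k r).getD j [] ++ (phases k r).getD (j + 1) [] := by
  rw [phaseStart_succ hj, phaseStart_succ (by omega), drop_phaseStart, drop_phases_eq hj,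
    List.flatten_cons, List.flatten_cons, ← List.append_assoc, Nat.add_assoc,
    Nat.add_sub_cancel_left, ← List.length_append, List.take_left]

lemma newCounts_getD (hj : j + 1 < (phases k r).length) :
    (newCounts k r).getD j 0 =
      (((phases k r).getD (j + 1) []).dedup.filter (· ∉ (phases k r).getD j [])).length := by
  have hzip : j < ((phases k r).zip (phases k r).tail).length := by
    rw [List.length_zip, List.length_tail]; omega
  rw [newCounts, List.getD_eq_getElem _ _ (by simpa using hzip), List.getElem_map,
    List.getElem_zip, List.getElem_tail, List.getD_eq_getElem _ _ hj,
    List.getD_eq_getElem _ _ (by omega)]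

end Phases

section Schedules

variable {h : ℕ} {r : List α} (s : PagingSchedule h r)

lemma mem_cache_of_not_requested {x : α} {a b : ℕ} (hab : a ≤ b) (hb : b ≤ r.length)
    (hx : x ∈ s.cache b) (hreq : ∀ m (hm : m < r.length), a ≤ m → m < b → r[m] ≠ x) :
    x ∈ s.cache a := by
  induction b, hab using Nat.le_induction with
  | base => exact hx
  | succ b hab ih =>
    refine ih (by omega) ?_ fun m hm ham hmb => hreq m hm ham (by omega)
    rcases Finset.mem_union.1 (s.update ⟨b, hb⟩ hx) with hcached | hserved
    · exact hcached
    · exact absurd (Finset.mem_singleton.1 hserved).symm (hreq b hb hab (by omega))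

lemma mem_cache_or_faulted {a b m : ℕ} (hm : m < r.length) (ham : a ≤ m) (hmb : m < b) :
    r[m] ∈ s.cache a ∨ ∃ i : Fin r.length,
      (a ≤ i.val ∧ i.val < b ∧ r.get i ∉ s.cache i.val) ∧ r.get i = r[m] := by
  induction m using Nat.strong_induction_on with
  | _ m ih =>
    by_cases hhit : r[m] ∈ s.cache m
    · by_cases hearlier : ∃ m', ∃ hm' : m' < r.length, a ≤ m' ∧ m' < m ∧ r[m'] = r[m]
      · obtain ⟨m', hm', ham', hlt, heq⟩ := hearlier
        exact heq ▸ ih m' hlt hm' ham' (by omega)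
      · exact .inl (mem_cache_of_not_requested s ham hm.le hhit
          fun m' hm' ham' hlt heq => hearlier ⟨m', hm', ham', hlt, heq⟩)
    · exact .inr ⟨⟨m, hm⟩, ⟨ham, hmb, hhit⟩, rfl⟩

lemma card_toFinset_window_le (a b : ℕ) :
    ((r.drop a).take (b - a)).toFinset.card ≤ windowFaults s a b + h := by
  set faulted := Finset.univ.filter
    fun i : Fin r.length => a ≤ i.val ∧ i.val < b ∧ r.get i ∉ s.cache i.val
  have hsub : ((r.drop a).take (b - a)).toFinset ⊆ faulted.image r.get ∪ s.cache a := by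
    intro x hx
    obtain ⟨n, hn, rfl⟩ := List.mem_iff_getElem.1 (List.mem_toFinset.1 hx)
    simp only [List.length_take, List.length_drop] at hn
    rw [List.getElem_take, List.getElem_drop]
    rcases mem_cache_or_faulted s (a := a) (b := b) (m := a + n) (by omega) (by omega)
      (by omega) with hcached | ⟨i, hi, heq⟩
    · exact Finset.mem_union_right _ hcached
    · exact Finset.mem_union_left _
        (Finset.mem_image.2 ⟨i, Finset.mem_filter.2 ⟨Finset.mem_univ _, hi⟩, heq⟩)
  calc _ ≤ (faulted.image r.get ∪ s.cache a).card := Finset.card_le_card hsub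
    _ ≤ (faulted.image r.get).card + (s.cache a).card := Finset.card_union_le _ _
    _ ≤ windowFaults s a b + h := add_le_add Finset.card_image_le (s.card_le a)

end Schedules

end

/-- two consecutive `k`-phases `i-1`, `i` together request exactly
`k + m_i` distinct items, and any paging schedule with `h` servers faults at
least `k + m_i - h` times during those two phases. -/
theorem consecutive_phases_distinct_and_faults {α : Type*} [DecidableEq α]
    (r : List α) (k h : ℕ) (hk : 0 < k) (i : ℕ) (hi : 0 < i)
    (hlt : i < (phases k r).length) :
    ((phases k r).getD (i - 1) [] ++ (phases k r).getD i []).dedup.length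
        = k + (newCounts k r).getD (i - 1) 0 ∧
    ∀ s : PagingSchedule h r,
      k + (newCounts k r).getD (i - 1) 0
        ≤ windowFaults s (phaseStart k r (i - 1)) (phaseStart k r (i + 1)) + h := by
  obtain ⟨j, rfl⟩ : ∃ j, i = j + 1 := ⟨i - 1, by omega⟩
  simp only [Nat.add_sub_cancel]
  have hdistinct : ((phases k r).getD j [] ++ (phases k r).getD (j + 1) []).dedup.length =
      k + (newCounts k r).getD j 0 := by
    rw [length_dedup_append, dedup_length_getD_phases hk hlt, newCounts_getD hlt]
  refine ⟨hdistinct, fun s => ?_⟩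
  have hwindow := card_toFinset_window_le s (phaseStart k r j) (phaseStart k r (j + 2))
  rwa [take_drop_phaseStart hlt, List.card_toFinset, hdistinct] at hwindow
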